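/- For n ≥ 3 and noncrossing partitions x, x' ∈ PE_n whose meet w in NC_n has {n-1, n} as a block, the partition w' obtained from w by replacing the block {n-1, n} with the two singleton blocks {n-1} and {n} is the meet of x and x' in PE_n. -/

import Mathlib

/-- A set partition of `[n]` (as a setoid on `Fin n`) is noncrossing. -/
def IsNoncrossing {n : ℕ} (x : Setoid (Fin n)) : Prop :=
  ∀ i j k l : Fin n, i < j → j < k → k < l → x i k → x j l → x i j

/-- `B` is a block of the set partition `x`. -/
def IsBlock {n : ℕ} (x : Setoid (Fin n)) (B : Set (Fin n)) : Prop :=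
  ∃ a, B = {b | x a b}

/-- The set partition whose unique (possibly) non-singleton block is `S`. -/
def blockSetoid {n : ℕ} (S : Set (Fin n)) : Setoid (Fin n) where
  r a b := a = b ∨ (a ∈ S ∧ b ∈ S)
  iseqv := by
    refine ⟨fun _ => Or.inl rfl, ?_, ?_⟩
    · rintro a b (rfl | ⟨h1, h2⟩)
      · exact Or.inl rfl
      · exact Or.inr ⟨h2, h1⟩
    · rintro a b c (rfl | ⟨h1, h2⟩) h
      · exact h
      · rcases h with rfl | ⟨h3, h4⟩
        · exact Or.inr ⟨h1, h2⟩
        · exact Or.inr ⟨h1, h4⟩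

/-- The element `x_i` of the left-modular chain: its unique non-singleton block is
`[i-1] ∪ {n}` (in 1-based terms), i.e. the elements with value `< i-1` or value `n-1`. -/
def xChain (n i : ℕ) : Setoid (Fin n) :=
  blockSetoid {a : Fin n | a.val + 1 < i ∨ a.val = n - 1}

/-- The noncrossing closure: the smallest noncrossing partition above `x`. -/
def ncClosure {n : ℕ} (x : Setoid (Fin n)) : Setoid (Fin n) :=
  sInf {y | IsNoncrossing y ∧ x ≤ y}

/-- The join of two noncrossing partitions in `NC_n`. -/
def joinNC {n : ℕ} (x y : Setoid (Fin n)) : Setoid (Fin n) :=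
  ncClosure (x ⊔ y)

/-- The join of a set of noncrossing partitions in `NC_n`. -/
def joinSetNC {n : ℕ} (X : Set (Setoid (Fin n))) : Setoid (Fin n) :=
  ncClosure (sSup X)

/-- Membership in `PE_n`: noncrossing, `{n-1, n}` is not a block, and it is not the case
that `{n}` is a singleton block while `1 ∼ n-1`. -/
def PEmem {n : ℕ} (x : Setoid (Fin n)) : Prop :=
  IsNoncrossing x ∧
  ¬ IsBlock x {a : Fin n | a.val = n - 2 ∨ a.val = n - 1} ∧
  ¬ (IsBlock x {a : Fin n | a.val = n - 1} ∧
      ∃ a b : Fin n, a.val = 0 ∧ b.val = n - 2 ∧ x a b)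

/-- `m` is the meet of `x` and `y` in the poset `PE_n`. -/
def IsMeetPE {n : ℕ} (x y m : Setoid (Fin n)) : Prop :=
  PEmem m ∧ m ≤ x ∧ m ≤ y ∧ ∀ z, PEmem z → z ≤ x → z ≤ y → z ≤ m

/-- `j` is the join of `x` and `y` in the poset `PE_n`. -/
def IsJoinPE {n : ℕ} (x y j : Setoid (Fin n)) : Prop :=
  PEmem j ∧ x ≤ j ∧ y ≤ j ∧ ∀ z, PEmem z → x ≤ z → y ≤ z → j ≤ z

/-- `x ⋖ y` in `PE_n`. -/
def CovPE {n : ℕ} (x y : Setoid (Fin n)) : Prop :=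
  PEmem x ∧ PEmem y ∧ x < y ∧ ∀ z, PEmem z → x < z → ¬ z < y

/-- The atoms of `NC_n`: partitions `a_{i,j}` with unique non-singleton block `{i, j}`. -/
def IsAtomNC {n : ℕ} (a : Setoid (Fin n)) : Prop :=
  ∃ i j : Fin n, i < j ∧ a = blockSetoid {i, j}

/-- The partial order `≼` on atoms of `NC_n` induced by the classes
`A_j = {a : a ≤ x_j and a ≰ x_{j-1}}`. -/
def atomPrec {n : ℕ} (a b : Setoid (Fin n)) : Prop :=
  ∃ i j : ℕ, 1 ≤ i ∧ i < j ∧ j ≤ n - 1 ∧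
    (a ≤ xChain n i ∧ ¬ a ≤ xChain n (i - 1)) ∧
    (b ≤ xChain n j ∧ ¬ b ≤ xChain n (j - 1))

/-- A set of atoms of `NC_n` is bounded below (BB). -/
def IsBBset {n : ℕ} (X : Set (Setoid (Fin n))) : Prop :=
  ∀ d ∈ X, ∃ a, IsAtomNC a ∧ atomPrec a d ∧ a < joinSetNC X

/-- A set of atoms of `NC_n` is NBB: no nonempty subset is bounded below. -/
def IsNBBset {n : ℕ} (X : Set (Setoid (Fin n))) : Prop :=
  ∀ Y ⊆ X, Y.Nonempty → ¬ IsBBset Y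

/-- `X` is an NBB base for the top element of `NC_n`. -/
def IsNBBBaseTop {n : ℕ} (X : Set (Setoid (Fin n))) : Prop :=
  (∀ a ∈ X, IsAtomNC a) ∧ IsNBBset X ∧ joinSetNC X = ⊤

/-- The graph `τ(X)` on vertex set `[n]` associated with a set `X` of atoms:
`i` and `j` are adjacent iff `a_{i,j} ∈ X`. -/
def atomGraph {n : ℕ} (X : Set (Setoid (Fin n))) : SimpleGraph (Fin n) where
  Adj i j := i ≠ j ∧ blockSetoid ({i, j} : Set (Fin n)) ∈ X
  symm := ⟨by
    rintro i j ⟨hne, hm⟩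
    exact ⟨hne.symm, by rwa [Set.pair_comm]⟩⟩
  loopless := ⟨fun i h => h.1 rfl⟩

/-- The parking label of the cover `x ⋖ y` is `p`: `y` merges blocks `B₁, B₂` of `x` with
`min B₁ < min B₂`, and `p = max { j ∈ B₁ : j ≤ i for all i ∈ B₂ }`. -/
def ParkingLabelIs {n : ℕ} (x y : Setoid (Fin n)) (p : Fin n) : Prop :=
  ∃ B₁ B₂ : Set (Fin n), IsBlock x B₁ ∧ IsBlock x B₂ ∧ B₁ ≠ B₂ ∧
    IsBlock y (B₁ ∪ B₂) ∧
    (∃ a ∈ B₁, ∀ b ∈ B₂, a < b) ∧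
    p ∈ B₁ ∧ (∀ i ∈ B₂, p ≤ i) ∧ (∀ j ∈ B₁, (∀ i ∈ B₂, j ≤ i) → j ≤ p)

/-- The label of the cover `w ⋖ z` in the `S_n` EL-labeling of `PE_n` coming from the
left-modular chain: `λ(w,z) = min { i-1 : x_i ≰ w and x_i ≤ z }`. -/
def LabelIs (n : ℕ) (w z : Setoid (Fin n)) (v : ℕ) : Prop :=
  ∃ i : ℕ, 1 ≤ i ∧ i ≤ n ∧ i - 1 = v ∧ (¬ xChain n i ≤ w ∧ xChain n i ≤ z) ∧
    ∀ j : ℕ, 1 ≤ j → j ≤ n → (¬ xChain n j ≤ w ∧ xChain n j ≤ z) → i ≤ j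

/-- The sequence of edge labels along a (saturated) chain, recorded as a list. -/
def chainLabels {α Λ : Type*} (lab : α → α → Λ) (c : List α) : List Λ :=
  List.zipWith lab c c.tail

/-- `c` is a saturated chain from `a` to `b` with respect to the cover relation `cov`. -/
def IsSatChainList {α : Type*} (cov : α → α → Prop) (a b : α) (c : List α) : Prop :=
  c.head? = some a ∧ c.getLast? = some b ∧ c.Chain' cov

/-- A chain is rising if its label sequence is strictly increasing. -/
def RisingChain {α Λ : Type*} [LT Λ] (lab : α → α → Λ) (c : List α) : Prop :=
  (chainLabels lab c).Chain' (· < ·)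

/-- `lab` is an EL-labeling with respect to the cover relation `cov` and order `le`:
every interval has a unique rising maximal chain, which is lexicographically least. -/
def IsELLabeling {α Λ : Type*} [PartialOrder Λ] (cov : α → α → Prop) (le : α → α → Prop)
    (lab : α → α → Λ) : Prop :=
  ∀ a b, le a b → ∃ c : List α, IsSatChainList cov a b c ∧ RisingChain lab c ∧
    (∀ c', IsSatChainList cov a b c' → RisingChain lab c' → c' = c) ∧
    (∀ c', IsSatChainList cov a b c' → c' ≠ c →
      List.Lex (· < ·) (chainLabels lab c) (chainLabels lab c'))

/-!
The meet `w = x ⊓ x'` in `NC_n` is noncrossing, and isolating the points of its block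
`{n-1, n}` keeps it noncrossing while making both `n-1` and `n` singletons, so neither
forbidden configuration of `PE_n` can occur. Conversely, a lower bound `z ∈ PE_n` of `x` and `x'`
refines `w`; if `z` joined `n-1` or `n` to another point, that point would lie in the `w`-block
`{n-1, n}`, making `{n-1, n}` a block of `z`, which `PE_n` forbids.
-/

namespace Setoid

variable {α : Type*}

def isolate (w : Setoid α) (S : Set α) : Setoid α where
  r a b := a = b ∨ (w a b ∧ a ∉ S ∧ b ∉ S)
  iseqv := by
    refine ⟨fun _ => Or.inl rfl, ?_, ?_⟩
    · rintro a b (rfl | ⟨h, ha, hb⟩)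
      exacts [Or.inl rfl, Or.inr ⟨w.symm h, hb, ha⟩]
    · rintro a b c (rfl | ⟨hab, ha, hb⟩) hbc
      · exact hbc
      · rcases hbc with rfl | ⟨hbc, -, hc⟩
        exacts [Or.inr ⟨hab, ha, hb⟩, Or.inr ⟨w.trans hab hbc, ha, hc⟩]

variable {w : Setoid α} {S : Set α} {a b : α}

theorem isolate_le (w : Setoid α) (S : Set α) : w.isolate S ≤ w := by
  rintro a b (rfl | ⟨h, -, -⟩)
  exacts [w.refl a, h]

theorem isolate_iff_of_mem_right (hb : b ∈ S) : w.isolate S a b ↔ a = b :=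
  ⟨fun h => h.elim id fun h => absurd hb h.2.2, Or.inl⟩

end Setoid

open Setoid

section Partitions

variable {n : ℕ} {w z : Setoid (Fin n)}

theorem IsNoncrossing.inf {x y : Setoid (Fin n)} (hx : IsNoncrossing x) (hy : IsNoncrossing y) :
    IsNoncrossing (x ⊓ y) :=
  fun i j k l hij hjk hkl hik hjl =>
    ⟨hx i j k l hij hjk hkl hik.1 hjl.1, hy i j k l hij hjk hkl hik.2 hjl.2⟩

theorem IsNoncrossing.isolate (hw : IsNoncrossing w) (S : Set (Fin n)) :
    IsNoncrossing (w.isolate S) := by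
  rintro i j k l hij hjk hkl (rfl | ⟨hik, hi, -⟩) (rfl | ⟨hjl, hj, -⟩)
  · exact (hij.trans hjk).false.elim
  · exact (hij.trans hjk).false.elim
  · exact (hjk.trans hkl).false.elim
  · exact Or.inr ⟨hw i j k l hij hjk hkl hik hjl, hi, hj⟩

theorem not_isBlock_isolate {S : Set (Fin n)} {p q : Fin n} (hp : p ∈ S) (hq : q ∈ S)
    (hpq : p ≠ q) : ¬ IsBlock (w.isolate S) S := by
  rintro ⟨a, hS⟩
  have hap : a = p := (isolate_iff_of_mem_right hp).1 (hS ▸ hp)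
  have haq : a = q := (isolate_iff_of_mem_right hq).1 (hS ▸ hq)
  exact hpq (hap.symm.trans haq)

theorem IsBlock.rel_iff {B : Set (Fin n)} {a b : Fin n} (hB : IsBlock w B) (ha : a ∈ B) :
    w a b ↔ b ∈ B := by
  obtain ⟨c, rfl⟩ := hB
  exact ⟨w.trans ha, w.trans (w.symm ha)⟩

theorem IsBlock.of_le_of_rel {p q : Fin n} (hB : IsBlock w {p, q}) (hzw : z ≤ w) (hpq : z p q) :
    IsBlock z {p, q} :=
  ⟨p, Set.ext fun c =>
    ⟨by rintro (rfl | rfl); exacts [z.refl _, hpq], fun h => (hB.rel_iff (Or.inl rfl)).1 (hzw h)⟩⟩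

theorem le_isolate_of_not_isBlock {p q : Fin n} (hB : IsBlock w {p, q}) (hzw : z ≤ w)
    (hz : ¬ IsBlock z {p, q}) : z ≤ w.isolate {p, q} := by
  have not_mem : ∀ {a b}, z a b → a ≠ b → a ∉ ({p, q} : Set (Fin n)) := by
    intro a b hab hne ha
    have hb := (hB.rel_iff ha).1 (hzw hab)
    rcases ha with rfl | rfl <;> rcases hb with rfl | rfl
    · exact hne rfl
    · exact hz (hB.of_le_of_rel hzw hab)
    · rw [Set.pair_comm] at hB hz
      exact hz (hB.of_le_of_rel hzw hab)
    · exact hne rfl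
  intro a b hab
  by_cases hne : a = b
  · exact Or.inl hne
  · exact Or.inr ⟨hzw hab, not_mem hab hne, not_mem (z.symm hab) (Ne.symm hne)⟩

end Partitions

/-- If the meet of `x, x' ∈ PE_n` in `NC_n` (the common refinement `x ⊓ x'`)
has `{n-1, n}` as a block, then the partition `w'` obtained by replacing this block by the
singletons `{n-1}` and `{n}` is the meet of `x` and `x'` in `PE_n`. -/
theorem PE_meet_desc (n : ℕ) (hn : 3 ≤ n) (x x' : Setoid (Fin n))
    (hx : PEmem x) (hx' : PEmem x')
    (hblk : IsBlock (x ⊓ x') {a : Fin n | a.val = n - 2 ∨ a.val = n - 1})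
    (w' : Setoid (Fin n))
    (hw' : ∀ a b : Fin n, w' a b ↔
      (a = b ∨ ((x ⊓ x') a b ∧ ¬(a.val = n - 2 ∨ a.val = n - 1) ∧
        ¬(b.val = n - 2 ∨ b.val = n - 1)))) :
    IsMeetPE x x' w' := by
  obtain ⟨p, q, hpq, hS⟩ : ∃ p q : Fin n, p ≠ q ∧
      {a : Fin n | a.val = n - 2 ∨ a.val = n - 1} = {p, q} :=
    ⟨⟨n - 2, by omega⟩, ⟨n - 1, by omega⟩, by simp [Fin.ext_iff]; omega,
      by ext a; simp [Fin.ext_iff]⟩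
  obtain rfl : w' = (x ⊓ x').isolate {p, q} :=
    Setoid.ext fun a b => by rw [hw', ← hS]; rfl
  have hle := isolate_le (x ⊓ x') {p, q}
  refine ⟨⟨(hx.1.inf hx'.1).isolate _, ?_, ?_⟩, hle.trans inf_le_left, hle.trans inf_le_right,
    fun z hz hzx hzx' => ?_⟩
  · rw [hS]
    exact not_isBlock_isolate (Or.inl rfl) (Or.inr rfl) hpq
  · rintro ⟨-, a, b, ha, hb, hab⟩
    have hbS : b ∈ ({p, q} : Set (Fin n)) := hS ▸ Or.inl hb
    have hab : a = b := (isolate_iff_of_mem_right hbS).1 hab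
    omega
  · have hz := hz.2.1
    rw [hS] at hblk hz
    exact le_isolate_of_not_isBlock hblk (le_inf hzx hzx') hz
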